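/- arXiv:2212.02457 — 10 statements merged into one kernel-verified Lean document; each statement's English description precedes it below -/
import Mathlib

section
/- Consider the regression adversarial covariate-shift dynamic in a real Hilbert space H: given θ⋆, θ⁰ ∈ H with θ⋆ ≠ θ⁰ and stepsize γ > 0, the iterates satisfy x_{t+1} = x_t + 2γ·⟨x_t, θ⋆ − θ⁰⟩·(θ⋆ − θ⁰). Then, setting γ̃ = 2γ‖θ⋆ − θ⁰‖² and Δ_b = (θ⋆ − θ⁰)/‖θ⋆ − θ⁰‖, the iterates admit the closed form x_T = (1 + γ̃)^T·⟨x_0, Δ_b⟩·Δ_b + (x_0 − ⟨x_0, Δ_b⟩·Δ_b) for every T ≥ 0. -/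
open scoped RealInnerProductSpace

/-- Regression adversarial covariate-shift dynamic: closed form of the iterates. -/
theorem regression_dynamic_closed_form
    {H : Type*} [NormedAddCommGroup H] [InnerProductSpace ℝ H]
    (θs θ0 : H) (hne : θs ≠ θ0) (γ : ℝ) (hγ : 0 < γ)
    (x : ℕ → H)
    (hx : ∀ t : ℕ, x (t + 1) = x t + (2 * γ * ⟪x t, θs - θ0⟫) • (θs - θ0)) :
    ∀ T : ℕ,
      x T =
        ((1 + 2 * γ * ‖θs - θ0‖ ^ 2) ^ T *
            ⟪x 0, ‖θs - θ0‖⁻¹ • (θs - θ0)⟫) • (‖θs - θ0‖⁻¹ • (θs - θ0)) +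
          (x 0 - ⟪x 0, ‖θs - θ0‖⁻¹ • (θs - θ0)⟫ • (‖θs - θ0‖⁻¹ • (θs - θ0))) := by
  have hd : θs - θ0 ≠ 0 := sub_ne_zero.mpr hne
  have hn : ‖θs - θ0‖ ≠ 0 := norm_ne_zero_iff.mpr hd
  have hsq : ⟪θs - θ0, θs - θ0⟫ = ‖θs - θ0‖ ^ 2 := real_inner_self_eq_norm_sq _
  intro T
  induction T with
  | zero =>
    simp only [pow_zero, one_mul]
    module
  | succ T ih =>
    rw [hx T, ih]
    simp only [inner_add_left, inner_sub_left, real_inner_smul_left,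
      real_inner_smul_right, hsq, pow_succ]
    match_scalars <;> field_simp <;> ring
end

section
/- Consider the regression adversarial covariate-shift dynamic x_{t+1} = x_t + 2γ·⟨x_t, θ⋆ − θ⁰⟩·(θ⋆ − θ⁰) in a real Hilbert space with θ⋆ ≠ θ⁰, γ > 0, and an initial point x_0 satisfying ⟨x_0, θ⋆ − θ⁰⟩ ≠ 0. Then for every T ≥ 0, with γ̃ = 2γ‖θ⋆ − θ⁰‖² and Δ_b = (θ⋆ − θ⁰)/‖θ⋆ − θ⁰‖, one has x_T ≠ 0 and the exact identity |⟨x_T, Δ_b⟩| / ‖x_T‖ = (1 + (‖x_0‖² − ⟨x_0, Δ_b⟩²) / ((1 + γ̃)^{2T} · ⟨x_0, Δ_b⟩²))^{−1/2}. -/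
open scoped RealInnerProductSpace

/-- Regression adversarial covariate-shift dynamic: exact identity for the
normalized alignment with the blessing direction. -/
theorem regression_dynamic_alignment_identity
    {H : Type*} [NormedAddCommGroup H] [InnerProductSpace ℝ H]
    (θs θ0 : H) (hne : θs ≠ θ0) (γ : ℝ) (hγ : 0 < γ)
    (x : ℕ → H)
    (hx : ∀ t : ℕ, x (t + 1) = x t + (2 * γ * ⟪x t, θs - θ0⟫) • (θs - θ0))
    (hx0 : ⟪x 0, θs - θ0⟫ ≠ 0) :
    ∀ T : ℕ,
      x T ≠ 0 ∧
      |⟪x T, ‖θs - θ0‖⁻¹ • (θs - θ0)⟫| / ‖x T‖ =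
        (Real.sqrt
          (1 + (‖x 0‖ ^ 2 - ⟪x 0, ‖θs - θ0‖⁻¹ • (θs - θ0)⟫ ^ 2) /
            ((1 + 2 * γ * ‖θs - θ0‖ ^ 2) ^ (2 * T) *
              ⟪x 0, ‖θs - θ0‖⁻¹ • (θs - θ0)⟫ ^ 2)))⁻¹ := by
  intro T
  set v : H := θs - θ0 with hv
  have hvne : v ≠ 0 := sub_ne_zero.mpr hne
  have hn : (0:ℝ) < ‖v‖ := norm_pos_iff.mpr hvne
  have hn0 : ‖v‖ ≠ 0 := ne_of_gt hn
  set g : ℝ := 1 + 2 * γ * ‖v‖ ^ 2 with hg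
  have hgpos : 0 < g := by nlinarith [sq_nonneg ‖v‖]
  have hg0 : g ≠ 0 := ne_of_gt hgpos
  set A : ℝ := ⟪x 0, v⟫ with hA
  -- inner product evolution
  have ha : ∀ t : ℕ, ⟪x t, v⟫ = g ^ t * A := by
    intro t
    induction t with
    | zero => simp [hA]
    | succ t ih =>
      rw [hx t, inner_add_left, real_inner_smul_left,
        real_inner_self_eq_norm_sq, ih, hg]
      ring
  -- invariant of orthogonal component
  have hc : ∀ t : ℕ, ‖x t‖ ^ 2 - ⟪x t, v⟫ ^ 2 / ‖v‖ ^ 2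
      = ‖x 0‖ ^ 2 - A ^ 2 / ‖v‖ ^ 2 := by
    intro t
    induction t with
    | zero => simp [hA]
    | succ t ih =>
      rw [hx t, ← ih]
      have h1 : ‖x t + (2 * γ * ⟪x t, v⟫) • v‖ ^ 2
          = ‖x t‖ ^ 2 + 2 * γ * ⟪x t, v⟫ * (2 * ⟪x t, v⟫)
            + (2 * γ * ⟪x t, v⟫) ^ 2 * ‖v‖ ^ 2 := by
        rw [norm_add_sq_real, real_inner_smul_right, norm_smul]
        rw [Real.norm_eq_abs, mul_pow, sq_abs]
        ring
      have h2 : ⟪x t + (2 * γ * ⟪x t, v⟫) • v, v⟫ = g * ⟪x t, v⟫ := by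
        rw [inner_add_left, real_inner_smul_left, real_inner_self_eq_norm_sq, hg]
        ring
      rw [h1, h2]
      field_simp
      ring
  have haT : ⟪x T, v⟫ = g ^ T * A := ha T
  have haTne : ⟪x T, v⟫ ≠ 0 := by
    rw [haT]
    exact mul_ne_zero (pow_ne_zero _ hg0) hx0
  have hxTne : x T ≠ 0 := by
    intro h
    apply haTne
    rw [h, inner_zero_left]
  refine ⟨hxTne, ?_⟩
  have hxTnorm : (0:ℝ) < ‖x T‖ := norm_pos_iff.mpr hxTne
  have hinner : ∀ t : ℕ, ⟪x t, ‖v‖⁻¹ • v⟫ = ‖v‖⁻¹ * ⟪x t, v⟫ := by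
    intro t; rw [real_inner_smul_right]
  have hg2T : g ^ (2 * T) = (g ^ T) ^ 2 := by
    rw [two_mul, pow_add, sq]
  set B : ℝ := ‖v‖⁻¹ * (g ^ T * A) with hB
  have hBne : B ≠ 0 := mul_ne_zero (inv_ne_zero hn0)
    (mul_ne_zero (pow_ne_zero _ hg0) hx0)
  have hnormT : ‖x T‖ ^ 2 = (‖x 0‖ ^ 2 - A ^ 2 / ‖v‖ ^ 2) + B ^ 2 := by
    have := hc T
    rw [haT] at this
    have hB2 : B ^ 2 = (g ^ T * A) ^ 2 / ‖v‖ ^ 2 := by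
      rw [hB]; field_simp
    rw [hB2]
    linarith
  have key : 1 + (‖x 0‖ ^ 2 - (‖v‖⁻¹ * A) ^ 2) / (g ^ (2 * T) * (‖v‖⁻¹ * A) ^ 2)
      = ‖x T‖ ^ 2 / B ^ 2 := by
    rw [hnormT, hg2T, hB]
    field_simp
    ring
  have hsqrt : Real.sqrt (1 + (‖x 0‖ ^ 2 - (‖v‖⁻¹ * A) ^ 2) /
      (g ^ (2 * T) * (‖v‖⁻¹ * A) ^ 2)) = ‖x T‖ / |B| := by
    rw [key, ← sq_abs B, ← div_pow, Real.sqrt_sq (by positivity)]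
  rw [hinner T, hinner 0, haT, hsqrt, ← hB]
  rw [inv_div]
end

section
/- (Regression: directional convergence.) Consider the regression adversarial covariate-shift dynamic x_{t+1} = x_t + 2γ·⟨x_t, θ⋆ − θ⁰⟩·(θ⋆ − θ⁰) in a real Hilbert space with θ⋆ ≠ θ⁰, γ > 0, and x_0 satisfying ⟨x_0, θ⋆ − θ⁰⟩ ≠ 0. Then |⟨x_T/‖x_T‖, Δ_b⟩| → 1 as T → ∞, where Δ_b = (θ⋆ − θ⁰)/‖θ⋆ − θ⁰‖. -/
/-!
Write `v = θ⋆ - θ⁰` and `u = v / ‖v‖`. Every step moves `x_t` along `u`, so the component of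
`x_t` orthogonal to `u` never changes, while `⟪x_t, v⟫` is multiplied by `1 + 2γ‖v‖² > 1` at
each step and hence blows up. Once the `u`-component dominates a bounded orthogonal part, the
cosine between `x_t` and `u` tends to `±1`.
-/

open Filter Topology
open scoped RealInnerProductSpace

section

variable {H : Type*} [NormedAddCommGroup H] [InnerProductSpace ℝ H]

theorem tendsto_abs_inner_normalize_of_bounded_orthogonal {ι : Type*} {l : Filter ι}
    {u : H} (hu : ‖u‖ = 1) {y : ι → H} {C : ℝ}
    (hperp : ∀ᶠ i in l, ‖y i - ⟪y i, u⟫ • u‖ ≤ C)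
    (hpar : Tendsto (fun i => |⟪y i, u⟫|) l atTop) :
    Tendsto (fun i => |⟪‖y i‖⁻¹ • y i, u⟫|) l (𝓝 1) := by
  -- `(1 + C / |a|)⁻¹ = |a| / (|a| + C)`, and `‖y‖ ≤ |a| + C` by the triangle inequality
  have hlower : Tendsto (fun i => (1 + C / |⟪y i, u⟫|)⁻¹) l (𝓝 1) := by
    simpa using ((tendsto_const_nhds.div_atTop hpar).const_add 1).inv₀ (by norm_num)
  simp_rw [real_inner_smul_left, abs_mul, abs_inv, abs_norm]
  refine tendsto_of_tendsto_of_tendsto_of_le_of_le' hlower tendsto_const_nhds ?_ ?_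
  · filter_upwards [hperp, hpar.eventually_gt_atTop 0] with i hC ha
    set a := ⟪y i, u⟫
    have hy : ‖y i‖ ≤ |a| + C := calc
      ‖y i‖ = ‖a • u + (y i - a • u)‖ := by rw [add_sub_cancel]
      _ ≤ |a| + C := by
        grw [norm_add_le, norm_smul, hu, Real.norm_eq_abs, mul_one, hC]
    have hy0 : 0 < ‖y i‖ := norm_pos_iff.mpr fun h => by simp [a, h] at ha
    rw [inv_mul_eq_div, one_add_div ha.ne', inv_div]
    gcongr
  · filter_upwards with i
    refine inv_mul_le_one_of_le₀ ?_ (norm_nonneg _)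
    simpa [hu] using abs_real_inner_le_norm (y i) u

theorem sub_inner_smul_eq_of_forall_eq_add_smul {u : H} (hu : ‖u‖ = 1) {x : ℕ → H}
    {b : ℕ → ℝ} (hx : ∀ t, x (t + 1) = x t + b t • u) (t : ℕ) :
    x t - ⟪x t, u⟫ • u = x 0 - ⟪x 0, u⟫ • u := by
  induction t with
  | zero => rfl
  | succ t ih =>
    rw [hx t, inner_add_left, real_inner_smul_left, real_inner_self_eq_norm_sq, hu, ← ih]
    module

section RankOneDynamic

variable {x : ℕ → H} {v : H} {κ : ℝ} (hx : ∀ t, x (t + 1) = x t + (κ * ⟪x t, v⟫) • v)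
include hx

theorem inner_eq_pow_mul_of_rankOne_step (t : ℕ) :
    ⟪x t, v⟫ = (1 + κ * ‖v‖ ^ 2) ^ t * ⟪x 0, v⟫ := by
  induction t with
  | zero => simp
  | succ t ih =>
    rw [hx t, inner_add_left, real_inner_smul_left, real_inner_self_eq_norm_sq, ih]
    ring

theorem tendsto_abs_inner_atTop_of_rankOne_step (hκ : 0 < κ) (hx0 : ⟪x 0, v⟫ ≠ 0) :
    Tendsto (fun t => |⟪x t, v⟫|) atTop atTop := by
  have hv : v ≠ 0 := fun h => hx0 (by rw [h, inner_zero_right])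
  have hr : 1 < 1 + κ * ‖v‖ ^ 2 := by
    have := norm_pos_iff.mpr hv
    linarith [mul_pos hκ (pow_pos this 2)]
  refine ((tendsto_pow_atTop_atTop_of_one_lt hr).atTop_mul_const (abs_pos.mpr hx0)).congr
    fun t => ?_
  rw [inner_eq_pow_mul_of_rankOne_step hx t, abs_mul, abs_pow, abs_of_pos (zero_lt_one.trans hr)]

end RankOneDynamic

end

theorem regression_directional_convergence_general
    {H : Type*} [NormedAddCommGroup H] [InnerProductSpace ℝ H]
    (θs θ0 : H) (γ : ℝ) (hγ : 0 < γ)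
    (x : ℕ → H)
    (hx : ∀ t : ℕ, x (t + 1) = x t + (2 * γ * ⟪x t, θs - θ0⟫) • (θs - θ0))
    (hx0 : ⟪x 0, θs - θ0⟫ ≠ 0) :
    Filter.Tendsto
      (fun T : ℕ => |⟪‖x T‖⁻¹ • x T, ‖θs - θ0‖⁻¹ • (θs - θ0)⟫|)
      Filter.atTop (nhds 1) := by
  set v := θs - θ0
  have hv : v ≠ 0 := fun h => hx0 (by rw [h, inner_zero_right])
  have hu : ‖‖v‖⁻¹ • v‖ = 1 := norm_smul_inv_norm hv
  have hstep : ∀ t, x (t + 1) = x t + (2 * γ * ⟪x t, v⟫ * ‖v‖) • ‖v‖⁻¹ • v := by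
    intro t
    rw [hx t, smul_smul, mul_assoc _ ‖v‖, mul_inv_cancel₀ (norm_ne_zero_iff.mpr hv), mul_one]
  have hpar : Tendsto (fun t => |⟪x t, ‖v‖⁻¹ • v⟫|) atTop atTop := by
    simp_rw [real_inner_smul_right, abs_mul, abs_inv, abs_norm]
    exact (tendsto_abs_inner_atTop_of_rankOne_step hx (by positivity) hx0).const_mul_atTop
      (inv_pos.mpr (norm_pos_iff.mpr hv))
  have hperp : ∀ t, ‖x t - ⟪x t, ‖v‖⁻¹ • v⟫ • ‖v‖⁻¹ • v‖ = ‖x 0 - ⟪x 0, ‖v‖⁻¹ • v⟫ • ‖v‖⁻¹ • v‖ :=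
    fun t => congrArg norm (sub_inner_smul_eq_of_forall_eq_add_smul hu hstep t)
  exact tendsto_abs_inner_normalize_of_bounded_orthogonal hu
    (Eventually.of_forall fun t => (hperp t).le) hpar

/-- Regression: directional convergence of the adversarial covariate-shift dynamic
to the blessing direction. -/
theorem regression_directional_convergence
    {H : Type*} [NormedAddCommGroup H] [InnerProductSpace ℝ H]
    (θs θ0 : H) (hne : θs ≠ θ0) (γ : ℝ) (hγ : 0 < γ)
    (x : ℕ → H)
    (hx : ∀ t : ℕ, x (t + 1) = x t + (2 * γ * ⟪x t, θs - θ0⟫) • (θs - θ0))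
    (hx0 : ⟪x 0, θs - θ0⟫ ≠ 0) :
    Filter.Tendsto
      (fun T : ℕ => |⟪‖x T‖⁻¹ • x T, ‖θs - θ0‖⁻¹ • (θs - θ0)⟫|)
      Filter.atTop (nhds 1) :=
  regression_directional_convergence_general θs θ0 γ hγ x hx hx0
end

section
/- (Nonlinear recursions: asymptotics.) Fix η, r > 0 and consider real sequences defined by a_{t+1} = a_t − η·σ′(a_t+b_t)·a_t + η·(σ(a_t) − σ(a_t+b_t)) and b_{t+1} = b_t − η·r·σ′(a_t+b_t)·a_t, with a_0 > 0 and b_0 = 0. There exists a constant c₀ > 0 (depending only on η, r) such that: if for some t₀ ∈ ℕ the pair (a_{t₀}, b_{t₀}) satisfies the initial condition (Assumption 1) with constant c₀, then a_T + b_T → −∞ and a_T → +∞ as T → ∞; moreover |a_T + b_T| = O(log T) and a_T = Θ(T), i.e. limsup_T |a_T + b_T|/log T < ∞ and 0 < liminf_T a_T/T ≤ limsup_T a_T/T < ∞. -/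
/-- The sigmoid function `σ(z) = 1/(1+e^{-z})`. -/
noncomputable def sigmoid (z : ℝ) : ℝ := 1 / (1 + Real.exp (-z))

/-- The derivative of the sigmoid, `σ'(z) = σ(z)(1-σ(z))`. -/
noncomputable def sigmoid' (z : ℝ) : ℝ := sigmoid z * (1 - sigmoid z)

/-- Assumption 1 (initial condition) with parameter `r` and constant `c`. -/
def InitCond (r c a b : ℝ) : Prop :=
  Real.exp (a + b) * a / (1 - Real.exp (2 * (a + b))) < 1 ∧
  Real.exp (a + b) * a / (1 + Real.exp (a + b)) ≥ (1 + 1 / a) / (1 + r + 1 / a) ∧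
  a > c ∧ a + b < 0

lemma sigmoid_eq (z : ℝ) : sigmoid z = Real.exp z / (1 + Real.exp z) := by
  unfold sigmoid
  rw [Real.exp_neg]
  have h := (Real.exp_pos z).ne'
  field_simp
  ring_nf

lemma sigmoid'_mul (z a : ℝ) :
    sigmoid' z * a = Real.exp z * a / (1 + Real.exp z) ^ 2 := by
  unfold sigmoid'
  rw [sigmoid_eq]
  have h : (0:ℝ) < 1 + Real.exp z := by positivity
  rw [eq_div_iff (by positivity)]
  field_simp
  ring_nf
  try exact Or.inl trivial

lemma sigmoid_le_one (z : ℝ) : sigmoid z ≤ 1 := by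
  unfold sigmoid
  rw [div_le_one (by positivity)]
  nlinarith [Real.exp_pos (-z)]

lemma sigmoid_pos (z : ℝ) : 0 < sigmoid z := by
  unfold sigmoid; positivity

lemma one_sub_exp_le_sigmoid (z : ℝ) : 1 - Real.exp (-z) ≤ sigmoid z := by
  unfold sigmoid
  rw [le_div_iff₀ (by positivity)]
  nlinarith [Real.exp_pos (-z), sq_nonneg (Real.exp (-z))]

lemma sigmoid_le_exp (z : ℝ) : sigmoid z ≤ Real.exp z := by
  rw [sigmoid_eq]
  rw [div_le_iff₀ (by positivity)]
  nlinarith [Real.exp_pos z, sq_nonneg (Real.exp z)]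

/-- `t * exp (-t) ≤ exp (-1)` -/
lemma te_le (t : ℝ) : t * Real.exp (-t) ≤ Real.exp (-1) := by
  have h := Real.add_one_le_exp (t - 1)
  have h2 : Real.exp (t - 1) * Real.exp (-t) = Real.exp (-1) := by
    rw [← Real.exp_add]; ring_nf
  calc t * Real.exp (-t) ≤ Real.exp (t-1) * Real.exp (-t) :=
        mul_le_mul_of_nonneg_right (by linarith) (Real.exp_pos _).le
    _ = Real.exp (-1) := h2

section helpers
variable {η r x a u M m A w D E : ℝ}

lemma h_xA (hx : 0 < x) (haA : A ≤ a) (hu2 : x * a ≤ M) : x * A ≤ M :=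
  le_trans (mul_le_mul_of_nonneg_left haA hx.le) hu2

lemma h_x8 (hx : 0 < x) (hM : 0 < M) (hA8M : 8*M ≤ A) (hxA : x * A ≤ M) : 8*x ≤ 1 := by
  nlinarith [mul_le_mul_of_nonneg_left hA8M hx.le]

lemma h_wub (hx : 0 < x) (hu : 0 < u) : u / (1+x)^2 ≤ u := by
  apply div_le_self hu.le
  nlinarith

lemma h_wlb (hx : 0 < x) (hu : 0 < u) : u * (1 - 2*x) ≤ u / (1+x)^2 := by
  rw [le_div_iff₀ (by positivity)]
  have h1 : 0 ≤ u * (x^2*(3+2*x)) :=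
    mul_nonneg hu.le (mul_nonneg (sq_nonneg x) (by linarith))
  nlinarith [h1]

lemma h_expa (ha : 8 ≤ a) : Real.exp (-a) ≤ 1/8 := by
  have h1 : a + 1 ≤ Real.exp a := Real.add_one_le_exp a
  rw [Real.exp_neg, inv_eq_one_div, div_le_div_iff₀ (Real.exp_pos a) (by norm_num)]
  linarith

lemma h_te_div (hb : 0 < r) : u * Real.exp (-(r*u)) ≤ Real.exp (-1) / r := by
  rw [le_div_iff₀ hb]
  calc u * Real.exp (-(r*u)) * r = (r*u) * Real.exp (-(r*u)) := by ring
    _ ≤ Real.exp (-1) := te_le _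

end helpers

set_option maxHeartbeats 1000000 in
lemma step (η r a s M m A : ℝ) (hη : 0 < η) (hr : 0 < r)
    (hM : M = Real.exp η / (η*(1+r)) + 1)
    (hm : m = Real.exp (-(η*(1+r)*M)) / (4*(1+r)))
    (hA : A = 8 + 8*M + 8*η*M + 4*η*(1+r)*M*M + 2*η)
    (hu1 : m ≤ Real.exp s * a) (hu2 : Real.exp s * a ≤ M) (haA : A ≤ a) :
    (3/4 ≤ sigmoid a - sigmoid s) ∧ (sigmoid a - sigmoid s ≤ 1) ∧
    (1 ≤ a + η * (sigmoid a - sigmoid s) - η * (sigmoid' s * a)) ∧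
    (a + η * (sigmoid a - sigmoid s) - η * (sigmoid' s * a) ≤ a + η) ∧
    (m ≤ Real.exp (s + η * (sigmoid a - sigmoid s) - η*(1+r) * (sigmoid' s * a)) *
      (a + η * (sigmoid a - sigmoid s) - η * (sigmoid' s * a))) ∧
    (Real.exp (s + η * (sigmoid a - sigmoid s) - η*(1+r) * (sigmoid' s * a)) *
      (a + η * (sigmoid a - sigmoid s) - η * (sigmoid' s * a)) ≤ M) := by
  have hr1 : (0:ℝ) < 1 + r := by linarith
  have hx : 0 < Real.exp s := Real.exp_pos s
  set x := Real.exp s with hxdef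
  set u := x * a with hudef
  have hMe : 0 < Real.exp η / (η*(1+r)) := by positivity
  have hM1 : 1 ≤ M := by rw [hM]; linarith
  have hMpos : 0 < M := by linarith
  have hmpos : 0 < m := by rw [hm]; positivity
  have hm4 : m ≤ 1/(4*(1+r)) := by
    rw [hm, div_le_div_iff₀ (by positivity) (by positivity), one_mul]
    have h1 : Real.exp (-(η*(1+r)*M)) ≤ 1 := by
      rw [Real.exp_le_one_iff, neg_nonpos]
      positivity
    calc Real.exp (-(η*(1+r)*M)) * (4*(1+r)) ≤ 1 * (4*(1+r)) :=
          mul_le_mul_of_nonneg_right h1 (by positivity)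
      _ = 4*(1+r) := one_mul _
  have hupos : 0 < u := lt_of_lt_of_le hmpos hu1
  -- A facts
  have hp1 : 0 < η*M := mul_pos hη hMpos
  have hp2 : 0 < η*(1+r)*M*M := by positivity
  have hA8 : (8:ℝ) ≤ A := by rw [hA]; linarith
  have hA8M : 8*M ≤ A := by rw [hA]; linarith
  have hA8eM : 8*(η*M) ≤ A := by rw [hA]; linarith
  have hA4eM2 : 4*(η*(1+r)*M*M) ≤ A := by rw [hA]; linarith
  have hA2e : 2*η ≤ A := by rw [hA]; linarith
  have hApos : (0:ℝ) < A := by linarith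
  have hapos : 0 < a := by linarith
  have hxA : x * A ≤ M := h_xA hx haA hu2
  have hx8 : 8 * x ≤ 1 := h_x8 hx hMpos hA8M hxA
  -- sigmoid values
  have hss_le : sigmoid s ≤ x := sigmoid_le_exp s
  have hss_pos : 0 < sigmoid s := sigmoid_pos s
  have hea : Real.exp (-a) ≤ 1/8 := h_expa (le_trans hA8 haA)
  have hsa_lb : 1 - 1/8 ≤ sigmoid a := by
    have := one_sub_exp_le_sigmoid a; linarith
  have hsa_ub : sigmoid a ≤ 1 := sigmoid_le_one a
  set D := sigmoid a - sigmoid s with hDdef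
  have hD1 : D ≤ 1 := by simp only [hDdef]; linarith
  have hD34 : 3/4 ≤ D := by simp only [hDdef]; linarith
  -- w bounds
  have hw : sigmoid' s * a = u / (1+x)^2 := by rw [sigmoid'_mul]
  set w := sigmoid' s * a with hwdef
  have hw0 : 0 ≤ w := by rw [hw]; positivity
  have hwu : w ≤ u := by rw [hw]; exact h_wub hx hupos
  have hwM : w ≤ M := le_trans hwu hu2
  have hwlb : u * (1 - 2*x) ≤ w := by rw [hw]; exact h_wlb hx hupos
  -- a' bounds
  have haM : η * M ≤ a / 8 := by
    have : 8*(η*M) ≤ a := le_trans hA8eM haA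
    linarith
  have hetaD : η * D ≤ η := by
    calc η * D ≤ η * 1 := mul_le_mul_of_nonneg_left hD1 hη.le
      _ = η := mul_one η
  have hetaD0 : 0 ≤ η * D := mul_nonneg hη.le (by linarith)
  have hetaw : η * w ≤ η * M := mul_le_mul_of_nonneg_left hwM hη.le
  have hetaw0 : 0 ≤ η * w := mul_nonneg hη.le hw0
  set a' := a + η * D - η * w with ha'def
  have ha'_ub : a' ≤ a + η := by simp only [ha'def]; linarith
  have ha'_lb : a - η * M ≤ a' := by simp only [ha'def]; linarith
  have ha'1 : 1 ≤ a' := by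
    have : a - a/8 ≥ 7 := by linarith
    linarith
  have ha'pos : 0 < a' := by linarith
  have hexp : Real.exp (s + η * D - η*(1+r) * w) = x * Real.exp (η * D - η*(1+r)*w) := by
    rw [hxdef, ← Real.exp_add]; ring_nf
  set E := Real.exp (η * D - η*(1+r)*w) with hEdef
  have hEpos : 0 < E := Real.exp_pos _
  have hgoal_eq : Real.exp (s + η * D - η*(1+r) * w) * a' = u * E * (a'/a) := by
    rw [hexp]; field_simp [hudef]; ring
  clear_value x u D w a' E
  refine ⟨hD34, hD1, ha'1, ha'_ub, ?_, ?_⟩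
  · -- lower bound
    rw [hgoal_eq]
    rcases le_or_gt u (1/(2*(1+r))) with hcase | hcase
    · have hu_half : u ≤ 1/2 := by
        calc u ≤ 1/(2*(1+r)) := hcase
          _ ≤ 1/2 := by
            rw [div_le_div_iff₀ (by positivity) (by norm_num)]
            linarith
      have hE1 : 1 ≤ E := by
        rw [hEdef]
        apply Real.one_le_exp
        have h1 : (1+r) * w ≤ (1+r) * u := mul_le_mul_of_nonneg_left hwu (by linarith)
        have h2 : (1+r) * u ≤ 1/2 := by
          have h2a : (1+r) * u ≤ (1+r) * (1/(2*(1+r))) :=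
            mul_le_mul_of_nonneg_left hcase (by linarith)
          have h2b : (1+r) * (1/(2*(1+r))) = 1/2 := by
            field_simp
          linarith
        have h3 : η * ((1+r)*w) ≤ η * (1/2) := by
          apply mul_le_mul_of_nonneg_left (le_trans h1 h2) hη.le
        have h4 : η * (3/4) ≤ η * D := mul_le_mul_of_nonneg_left hD34 hη.le
        linarith only [h3, h4, hη.le]
      have ha'a : a ≤ a' := by
        have h5 : η * w ≤ η * u := mul_le_mul_of_nonneg_left hwu hη.le
        have h6 : η * u ≤ η * (1/2) := mul_le_mul_of_nonneg_left hu_half hη.le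
        have h4 : η * (3/4) ≤ η * D := mul_le_mul_of_nonneg_left hD34 hη.le
        simp only [ha'def]; linarith only [h5, h6, h4, hη.le]
      calc m ≤ u := hu1
        _ = u * 1 * 1 := by ring
        _ ≤ u * E * (a'/a) := by
            apply mul_le_mul
            · exact mul_le_mul_of_nonneg_left hE1 hupos.le
            · rw [le_div_iff₀ hapos]; linarith
            · norm_num
            · positivity
    · have hE1 : Real.exp (-(η*(1+r)*M)) ≤ E := by
        rw [hEdef]
        apply Real.exp_le_exp.mpr
        have h1 : (1+r) * w ≤ (1+r) * M := mul_le_mul_of_nonneg_left hwM (by linarith)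
        have h2 : η * ((1+r)*w) ≤ η * ((1+r)*M) := mul_le_mul_of_nonneg_left h1 hη.le
        linarith only [h2, hetaD0]
      have ha'a2 : 1/2 ≤ a'/a := by
        rw [le_div_iff₀ hapos]
        have : a - η*M ≥ a - a/8 := by linarith
        linarith
      have hmeq : m = (1/(2*(1+r))) * Real.exp (-(η*(1+r)*M)) * (1/2) := by
        rw [hm]; field_simp; ring
      rw [hmeq]
      apply mul_le_mul
      · exact mul_le_mul hcase.le hE1 (Real.exp_pos _).le hupos.le
      · exact ha'a2
      · norm_num
      · positivity
  · -- upper bound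
    rw [hgoal_eq]
    have hux : u * x ≤ M * (M/A) := by
      have h1 : x ≤ M/A := by rw [le_div_iff₀ hApos]; linarith [hxA]
      calc u * x ≤ M * x := mul_le_mul_of_nonneg_right hu2 hx.le
        _ ≤ M * (M/A) := mul_le_mul_of_nonneg_left h1 hMpos.le
    have h2 : 2*(η*((1+r)*(u*x))) ≤ 1/2 := by
      have h3 : η*((1+r)*(u*x)) ≤ η*((1+r)*(M*(M/A))) := by
        apply mul_le_mul_of_nonneg_left ?_ hη.le
        apply mul_le_mul_of_nonneg_left hux (by linarith)
      have h4 : η*((1+r)*(M*(M/A))) = (η*(1+r)*M*M)/A := by ring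
      have h5 : (η*(1+r)*M*M)/A ≤ 1/4 := by
        rw [div_le_div_iff₀ hApos (by norm_num)]
        linarith [hA4eM2]
      linarith
    have hEub : E ≤ Real.exp (η - η*(1+r)*u) * Real.exp (1/2 : ℝ) := by
      rw [hEdef, ← Real.exp_add]
      apply Real.exp_le_exp.mpr
      have h1 : η*((1+r)*(u*(1-2*x))) ≤ η*((1+r)*w) := by
        apply mul_le_mul_of_nonneg_left ?_ hη.le
        apply mul_le_mul_of_nonneg_left hwlb (by linarith)
      ring_nf at h1 h2 hetaD ⊢
      linarith only [h1, h2, hetaD]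
    have ha'a : a'/a ≤ Real.exp (1/2 : ℝ) := by
      have h1 : a' ≤ a * (1 + 1/2) := by
        have h6 : η ≤ A/2 := by linarith
        have h7 : A/2 ≤ a/2 := by linarith
        have : a' ≤ a + η := ha'_ub
        linarith
      have h8 : (1:ℝ) + 1/2 ≤ Real.exp (1/2:ℝ) := by
        have := Real.add_one_le_exp (1/2:ℝ); linarith
      rw [div_le_iff₀ hapos]
      calc a' ≤ a * (1+1/2) := h1
        _ = (1+1/2) * a := by ring
        _ ≤ Real.exp (1/2:ℝ) * a := mul_le_mul_of_nonneg_right h8 hapos.le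
    have hkey : u * Real.exp (-(η*(1+r)*u)) ≤ Real.exp (-1) / (η*(1+r)) :=
      h_te_div (by positivity)
    have hsplit : Real.exp (η - η*(1+r)*u) = Real.exp η * Real.exp (-(η*(1+r)*u)) := by
      rw [← Real.exp_add]; ring_nf
    have hb1 : u * E ≤ u * (Real.exp (η - η*(1+r)*u) * Real.exp (1/2:ℝ)) :=
      mul_le_mul_of_nonneg_left hEub hupos.le
    have hb2 : u * E * (a'/a) ≤ u * (Real.exp (η - η*(1+r)*u) * Real.exp (1/2:ℝ)) * Real.exp (1/2:ℝ) := by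
      apply mul_le_mul hb1 ha'a (by positivity) (by positivity)
    rw [hsplit] at hb2
    have hb3 : u * (Real.exp η * Real.exp (-(η*(1+r)*u)) * Real.exp (1/2:ℝ)) * Real.exp (1/2:ℝ)
        = (u * Real.exp (-(η*(1+r)*u))) * Real.exp η * (Real.exp (1/2:ℝ) * Real.exp (1/2:ℝ)) := by ring
    have hee : Real.exp (1/2:ℝ) * Real.exp (1/2:ℝ) = Real.exp 1 := by
      rw [← Real.exp_add]; norm_num
    have hb4 : (u * Real.exp (-(η*(1+r)*u))) * Real.exp η * (Real.exp (1/2:ℝ) * Real.exp (1/2:ℝ))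
        ≤ (Real.exp (-1) / (η*(1+r))) * Real.exp η * Real.exp 1 := by
      rw [hee]
      apply mul_le_mul_of_nonneg_right ?_ (Real.exp_pos 1).le
      exact mul_le_mul_of_nonneg_right hkey (Real.exp_pos η).le
    have hb5 : (Real.exp (-1:ℝ) / (η*(1+r))) * Real.exp η * Real.exp 1 = Real.exp η / (η*(1+r)) := by
      have he1 : Real.exp (-1:ℝ) * Real.exp η * Real.exp 1 = Real.exp η := by
        rw [← Real.exp_add, ← Real.exp_add]; norm_num
      calc (Real.exp (-1:ℝ) / (η*(1+r))) * Real.exp η * Real.exp 1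
          = (Real.exp (-1:ℝ) * Real.exp η * Real.exp 1) / (η*(1+r)) := by ring
        _ = Real.exp η / (η*(1+r)) := by rw [he1]
    calc u * E * (a'/a) ≤ u * (Real.exp η * Real.exp (-(η*(1+r)*u)) * Real.exp (1/2:ℝ)) * Real.exp (1/2:ℝ) := hb2
      _ = (u * Real.exp (-(η*(1+r)*u))) * Real.exp η * (Real.exp (1/2:ℝ) * Real.exp (1/2:ℝ)) := hb3
      _ ≤ (Real.exp (-1) / (η*(1+r))) * Real.exp η * Real.exp 1 := hb4
      _ = Real.exp η / (η*(1+r)) := hb5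
      _ ≤ M := by rw [hM]; linarith

set_option maxHeartbeats 1000000 in
/-- Nonlinear recursions: `a_T + b_T → -∞`, `a_T → +∞`, `|a_T + b_T| = O(log T)`
and `a_T = Θ(T)`. -/
theorem nonlinear_recursion_asymptotics
    (η r : ℝ) (hη : 0 < η) (hr : 0 < r) :
    ∃ c₀ > (0 : ℝ), ∀ (a b : ℕ → ℝ),
      (∀ t : ℕ, a (t + 1) =
        a t - η * sigmoid' (a t + b t) * a t +
          η * (sigmoid (a t) - sigmoid (a t + b t))) →
      (∀ t : ℕ, b (t + 1) = b t - η * r * sigmoid' (a t + b t) * a t) →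
      a 0 > 0 → b 0 = 0 →
      (∃ t₀ : ℕ, InitCond r c₀ (a t₀) (b t₀)) →
      Filter.Tendsto (fun T : ℕ => a T + b T) Filter.atTop Filter.atBot ∧
      Filter.Tendsto a Filter.atTop Filter.atTop ∧
      (fun T : ℕ => a T + b T) =O[Filter.atTop] (fun T : ℕ => Real.log T) ∧
      (fun T : ℕ => a T) =Θ[Filter.atTop] (fun T : ℕ => (T : ℝ)) := by
  have hr1 : (0:ℝ) < 1 + r := by linarith
  set M : ℝ := Real.exp η / (η*(1+r)) + 1 with hMdef
  set m : ℝ := Real.exp (-(η*(1+r)*M)) / (4*(1+r)) with hmdef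
  set A : ℝ := 8 + 8*M + 8*η*M + 4*η*(1+r)*M*M + 2*η with hAdef
  set c₀ : ℝ := ((2+r)*A + 1 - Real.log m)/(1+r) with hc₀def
  have hMe : 0 < Real.exp η / (η*(1+r)) := by positivity
  have hM1 : 1 ≤ M := by rw [hMdef]; linarith
  have hMpos : 0 < M := by linarith
  have hmpos : 0 < m := by rw [hmdef]; positivity
  have hm4 : m ≤ 1/(4*(1+r)) := by
    rw [hmdef, div_le_div_iff₀ (by positivity) (by positivity), one_mul]
    have h1 : Real.exp (-(η*(1+r)*M)) ≤ 1 := by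
      rw [Real.exp_le_one_iff, neg_nonpos]; positivity
    calc Real.exp (-(η*(1+r)*M)) * (4*(1+r)) ≤ 1 * (4*(1+r)) :=
          mul_le_mul_of_nonneg_right h1 (by positivity)
      _ = 4*(1+r) := one_mul _
  have hm1 : m < 1 := by
    have : 1/(4*(1+r)) < 1 := by
      rw [div_lt_one (by positivity)]; linarith
    linarith
  have hlogm : Real.log m < 0 := Real.log_neg hmpos hm1
  have hp1 : 0 < η*M := mul_pos hη hMpos
  have hp2 : 0 < η*(1+r)*M*M := by positivity
  have hA8 : (8:ℝ) ≤ A := by rw [hAdef]; linarith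
  have hApos : (0:ℝ) < A := by linarith
  have hc₀eq : (1+r)*c₀ = (2+r)*A + 1 - Real.log m := by
    rw [hc₀def]; field_simp
  have hc₀A : A ≤ c₀ := by nlinarith [hc₀eq, hlogm, hApos, hr1]
  have hc₀pos : 0 < c₀ := by linarith
  clear_value M m A c₀
  refine ⟨c₀, hc₀pos, ?_⟩
  intro a b ha hb _ _ hinit
  obtain ⟨t₀, h1, h2, h3, h4⟩ := hinit
  have ha0 : 0 < a t₀ := lt_trans hc₀pos h3
  -- recurrence in convenient form
  have e1 : ∀ t, a (t+1) = a t + η*(sigmoid (a t) - sigmoid (a t + b t)) - η*(sigmoid' (a t + b t) * a t) := by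
    intro t; rw [ha t]; ring
  have e2 : ∀ t, a (t+1) + b (t+1) =
      (a t + b t) + η*(sigmoid (a t) - sigmoid (a t + b t)) - η*(1+r)*(sigmoid' (a t + b t) * a t) := by
    intro t; rw [ha t, hb t]; ring
  -- base facts
  have hx₀pos : 0 < Real.exp (a t₀ + b t₀) := Real.exp_pos _
  have hx₀lt : Real.exp (a t₀ + b t₀) < 1 := Real.exp_lt_one_iff.mpr h4
  have hx₀sq : Real.exp (2*(a t₀ + b t₀)) = (Real.exp (a t₀ + b t₀))^2 := by
    rw [two_mul, Real.exp_add]; ring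
  have hden : 0 < 1 - Real.exp (2*(a t₀ + b t₀)) := by
    rw [hx₀sq]; nlinarith
  have hbase_ub : Real.exp (a t₀ + b t₀) * a t₀ ≤ M := by
    have := (div_lt_one hden).mp h1
    nlinarith [hx₀sq, sq_nonneg (Real.exp (a t₀ + b t₀))]
  have hbase_lb : m ≤ Real.exp (a t₀ + b t₀) * a t₀ := by
    have hinva : 0 < 1/(a t₀) := by positivity
    have hPd : 0 < 1 + r + 1/(a t₀) := by linarith
    have hP : 1/(1+r) ≤ (1 + 1/(a t₀))/(1 + r + 1/(a t₀)) := by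
      rw [div_le_div_iff₀ hr1 hPd]
      have hq : 0 ≤ r*(1/(a t₀)) := by positivity
      nlinarith [hq]
    have h2' : (1 + 1/(a t₀))/(1 + r + 1/(a t₀)) * (1 + Real.exp (a t₀ + b t₀))
        ≤ Real.exp (a t₀ + b t₀) * a t₀ := by
      rw [← le_div_iff₀ (by positivity)]
      exact h2
    have hPpos : 0 ≤ (1 + 1/(a t₀))/(1 + r + 1/(a t₀)) := by positivity
    have : (1 + 1/(a t₀))/(1 + r + 1/(a t₀)) ≤ Real.exp (a t₀ + b t₀) * a t₀ := by
      nlinarith [hPpos, hx₀pos.le, h2']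
    have hm1r : m ≤ 1/(1+r) := by
      have : 1/(4*(1+r)) ≤ 1/(1+r) := by
        rw [div_le_div_iff₀ (by positivity) hr1]; nlinarith
      linarith
    linarith
  have hbasev : (1+r)*c₀ ≤ (1+r)*(a t₀) - (a t₀ + b t₀) := by
    nlinarith [mul_lt_mul_of_pos_left h3 hr1]
  -- the master induction
  have key : ∀ k : ℕ,
      (m ≤ Real.exp (a (t₀+k) + b (t₀+k)) * a (t₀+k)) ∧
      (Real.exp (a (t₀+k) + b (t₀+k)) * a (t₀+k) ≤ M) ∧
      (A ≤ a (t₀+k)) ∧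
      ((1+r)*c₀ ≤ (1+r)*(a (t₀+k)) - (a (t₀+k) + b (t₀+k))) ∧
      (a (t₀+k) ≤ a t₀ + η*k) ∧
      ((1+r)*(a t₀) - (a t₀ + b t₀) + (3/4*(η*r))*k ≤ (1+r)*(a (t₀+k)) - (a (t₀+k) + b (t₀+k))) := by
    intro k
    induction k with
    | zero =>
        refine ⟨hbase_lb, hbase_ub, le_trans hc₀A h3.le, hbasev, by simp, by simp⟩
    | succ k ih =>
        obtain ⟨ih1, ih2, ih3, ih4, ih5, ih6⟩ := ih
        have hst := step η r (a (t₀+k)) (a (t₀+k) + b (t₀+k)) M m A hη hr hMdef hmdef hAdef ih1 ih2 ih3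
        obtain ⟨hD34, hD1, ha1', haub', hul', huu'⟩ := hst
        have hkk : t₀ + (k+1) = (t₀ + k) + 1 := rfl
        rw [hkk]
        have hu1' : m ≤ Real.exp (a ((t₀+k)+1) + b ((t₀+k)+1)) * a ((t₀+k)+1) := by
          rw [e2 (t₀+k), e1 (t₀+k)]; exact hul'
        have hu2' : Real.exp (a ((t₀+k)+1) + b ((t₀+k)+1)) * a ((t₀+k)+1) ≤ M := by
          rw [e2 (t₀+k), e1 (t₀+k)]; exact huu'
        have ha1'' : 1 ≤ a ((t₀+k)+1) := by rw [e1 (t₀+k)]; exact ha1'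
        have ha'pos : 0 < a ((t₀+k)+1) := by linarith
        have hub'' : a ((t₀+k)+1) ≤ a (t₀+k) + η := by rw [e1 (t₀+k)]; exact haub'
        have hv' : (1+r)*(a ((t₀+k)+1)) - (a ((t₀+k)+1) + b ((t₀+k)+1)) =
            ((1+r)*(a (t₀+k)) - (a (t₀+k) + b (t₀+k)))
              + η*r*(sigmoid (a (t₀+k)) - sigmoid (a (t₀+k) + b (t₀+k))) := by
          rw [e2 (t₀+k), e1 (t₀+k)]; ring
        have hinc : 3/4*(η*r) ≤ η*r*(sigmoid (a (t₀+k)) - sigmoid (a (t₀+k) + b (t₀+k))) := by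
          have h0 : 0 ≤ η*r := by positivity
          linarith only [mul_le_mul_of_nonneg_left hD34 h0]
        have hv4 : (1+r)*c₀ ≤ (1+r)*(a ((t₀+k)+1)) - (a ((t₀+k)+1) + b ((t₀+k)+1)) := by
          rw [hv']; linarith only [hinc, ih4, mul_pos hη hr]
        have hAle : A ≤ a ((t₀+k)+1) := by
          have hlogu : Real.log (Real.exp (a ((t₀+k)+1) + b ((t₀+k)+1)) * a ((t₀+k)+1))
              = (a ((t₀+k)+1) + b ((t₀+k)+1)) + Real.log (a ((t₀+k)+1)) := by
            rw [Real.log_mul (Real.exp_ne_zero _) (ne_of_gt ha'pos), Real.log_exp]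
          have hlm : Real.log m ≤ (a ((t₀+k)+1) + b ((t₀+k)+1)) + Real.log (a ((t₀+k)+1)) := by
            rw [← hlogu]; exact Real.log_le_log hmpos hu1'
          have hla : Real.log (a ((t₀+k)+1)) ≤ a ((t₀+k)+1) - 1 :=
            Real.log_le_sub_one_of_pos ha'pos
          -- (1+r) a' = v' + s' ≥ (1+r)c₀ + log m - log a' ≥ (1+r)c₀ + log m - a' + 1
          have hs_lb : Real.log m - (a ((t₀+k)+1) - 1) ≤ a ((t₀+k)+1) + b ((t₀+k)+1) := by linarith
          have hfin : (2+r)*A < (2+r)*(a ((t₀+k)+1)) := by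
            linarith only [hv4, hs_lb, hc₀eq, hlm, hla]
          have := lt_of_mul_lt_mul_left hfin (by linarith : (0:ℝ) ≤ 2+r)
          linarith only [this]
        refine ⟨hu1', hu2', hAle, hv4, ?_, ?_⟩
        · push_cast
          linarith [hub'', ih5]
        · push_cast
          rw [hv']
          push_cast at ih6
          linarith [hinc, ih6]
  -- consequences for T ≥ t₀
  have hglog : ∀ k : ℕ, Real.log m - Real.log (a (t₀+k)) ≤ a (t₀+k) + b (t₀+k) ∧
      a (t₀+k) + b (t₀+k) ≤ Real.log M - Real.log (a (t₀+k)) := by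
    intro k
    obtain ⟨k1, k2, k3, _, _, _⟩ := key k
    have hpos : 0 < a (t₀+k) := by linarith
    have hlogu : Real.log (Real.exp (a (t₀+k) + b (t₀+k)) * a (t₀+k))
        = (a (t₀+k) + b (t₀+k)) + Real.log (a (t₀+k)) := by
      rw [Real.log_mul (Real.exp_ne_zero _) (ne_of_gt hpos), Real.log_exp]
    constructor
    · have := Real.log_le_log hmpos k1
      rw [hlogu] at this; linarith
    · have := Real.log_le_log (by positivity) k2
      rw [hlogu] at this; linarith
  have hlin : ∀ k : ℕ, (3/4*(η*r))*(k:ℝ) ≤ (2+r)*(a (t₀+k)) - (2+r)*A - 2 := by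
    intro k
    obtain ⟨k1, k2, k3, _, _, k6⟩ := key k
    have hpos : 0 < a (t₀+k) := by linarith
    have hla : Real.log (a (t₀+k)) ≤ a (t₀+k) - 1 := Real.log_le_sub_one_of_pos hpos
    have hsl := (hglog k).1
    -- (1+r) a T - s T ≥ v0 + 3/4 ηr k  and  v0 ≥ (1+r)c₀
    linarith only [k6, hbasev, hc₀eq, hsl, hla]
  -- tendsto a atTop
  have hq : (0:ℝ) < 3/4*(η*r)/(2+r) := by positivity
  have hlinT : ∀ T : ℕ, t₀ ≤ T → A + (3/4*(η*r)/(2+r))*((T:ℝ) - t₀) ≤ a T := by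
    intro T hT
    obtain ⟨k, rfl⟩ := Nat.exists_eq_add_of_le hT
    have h := hlin k
    have h3 : (3/4*(η*r)/(2+r))*(k:ℝ) ≤ a (t₀+k) - A := by
      rw [div_mul_eq_mul_div, div_le_iff₀ (by linarith : (0:ℝ) < 2+r)]
      nlinarith [h]
    push_cast
    linarith [h3]
  have htendA : Filter.Tendsto a Filter.atTop Filter.atTop := by
    apply Filter.tendsto_atTop_mono' Filter.atTop
      (Filter.eventually_atTop.mpr ⟨t₀, fun T hT => hlinT T hT⟩)
    have t1 : Filter.Tendsto (fun x:ℝ => A + (3/4*(η*r)/(2+r))*(x - (t₀:ℝ)))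
        Filter.atTop Filter.atTop := by
      apply Filter.tendsto_atTop_add_const_left
      apply Filter.Tendsto.const_mul_atTop hq
      exact Filter.tendsto_atTop_add_const_right _ _ Filter.tendsto_id
    exact t1.comp tendsto_natCast_atTop_atTop
  -- tendsto s atBot
  have htendS : Filter.Tendsto (fun T : ℕ => a T + b T) Filter.atTop Filter.atBot := by
    have hcomp : ∀ T, t₀ ≤ T → a T + b T ≤ Real.log M - Real.log (a T) := by
      intro T hT
      obtain ⟨k, rfl⟩ := Nat.exists_eq_add_of_le hT
      exact (hglog k).2
    have hneg : Filter.Tendsto (fun T : ℕ => -Real.log (a T)) Filter.atTop Filter.atBot :=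
      Filter.tendsto_neg_atTop_atBot.comp (Real.tendsto_log_atTop.comp htendA)
    have ht2 : Filter.Tendsto (fun T : ℕ => Real.log M - Real.log (a T)) Filter.atTop Filter.atBot := by
      simpa [sub_eq_add_neg] using Filter.tendsto_atBot_add_const_left Filter.atTop (Real.log M) hneg
    exact Filter.tendsto_atBot_mono' _ (Filter.eventually_atTop.mpr ⟨t₀, hcomp⟩) ht2
  refine ⟨htendS, htendA, ?_, ?_, ?_⟩
  · -- BigO of s vs log
    rw [Asymptotics.isBigO_iff]
    set K : ℝ := |Real.log M| + |Real.log m| + Real.log (a t₀ + η) with hKdef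
    have ha8 : (8:ℝ) ≤ a t₀ := by linarith [hc₀A, h3, hA8]
    have hK0 : 0 ≤ K := by
      have : 0 ≤ Real.log (a t₀ + η) := Real.log_nonneg (by linarith)
      rw [hKdef]; positivity
    refine ⟨K+1, ?_⟩
    filter_upwards [Filter.eventually_ge_atTop t₀, Filter.eventually_ge_atTop 3] with T hT1 hT2
    obtain ⟨k, rfl⟩ := Nat.exists_eq_add_of_le hT1
    obtain ⟨_, _, k3, _, k5, _⟩ := key k
    have hpos : 0 < a (t₀+k) := by linarith
    have hT3 : (3:ℝ) ≤ ((t₀+k : ℕ):ℝ) := by exact_mod_cast hT2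
    have hTpos : (0:ℝ) < ((t₀+k : ℕ):ℝ) := by linarith
    have hlogT1 : 1 ≤ Real.log ((t₀+k : ℕ):ℝ) := by
      rw [Real.le_log_iff_exp_le hTpos]
      calc Real.exp 1 ≤ 2.7182818286 := Real.exp_one_lt_d9.le
        _ ≤ 3 := by norm_num
        _ ≤ ((t₀+k : ℕ):ℝ) := hT3
    have hub2 : a (t₀+k) ≤ a t₀ + η*((t₀+k : ℕ):ℝ) := by
      have hkT : (k:ℝ) ≤ ((t₀+k : ℕ):ℝ) := by push_cast; linarith [(Nat.cast_nonneg t₀ : (0:ℝ) ≤ (t₀:ℝ))]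
      have hm2 : η*(k:ℝ) ≤ η*((t₀+k : ℕ):ℝ) := mul_le_mul_of_nonneg_left hkT hη.le
      linarith only [k5, hm2]
    have hub3 : a t₀ + η*((t₀+k : ℕ):ℝ) ≤ (a t₀ + η)*((t₀+k : ℕ):ℝ) := by
      have hx : 0 ≤ (a t₀) * (((t₀+k : ℕ):ℝ) - 1) := mul_nonneg (by linarith) (by linarith)
      linarith only [hx]
    have hlog_ub : Real.log (a (t₀+k)) ≤ Real.log (a t₀ + η) + Real.log ((t₀+k : ℕ):ℝ) := by
      rw [← Real.log_mul (by linarith) (by linarith)]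
      exact Real.log_le_log hpos (by linarith)
    have hlogA0 : 0 ≤ Real.log (a (t₀+k)) := Real.log_nonneg (by linarith)
    have habs_M : Real.log M ≤ |Real.log M| := le_abs_self _
    have habs_m : -|Real.log m| ≤ Real.log m := neg_abs_le _
    have hsu := (hglog k).2
    have hsl := (hglog k).1
    have hKlog : K ≤ K * Real.log ((t₀+k : ℕ):ℝ) := by
      have := mul_le_mul_of_nonneg_left hlogT1 hK0
      linarith only [this]
    rw [Real.norm_eq_abs, Real.norm_eq_abs,
      abs_of_nonneg (Real.log_nonneg (by linarith : (1:ℝ) ≤ ((t₀+k : ℕ):ℝ)))]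
    rw [abs_le]
    constructor
    · have : Real.log m - Real.log (a (t₀+k)) ≥
          -|Real.log m| - (Real.log (a t₀ + η) + Real.log ((t₀+k : ℕ):ℝ)) := by
        linarith [hlog_ub, habs_m]
      have hKK : |Real.log m| + Real.log (a t₀ + η) ≤ K := by
        rw [hKdef]; linarith [abs_nonneg (Real.log M)]
      linarith only [hsl, this, hKK, hKlog, hlogT1]
    · have hKK : |Real.log M| ≤ K := by
        rw [hKdef]
        have : 0 ≤ Real.log (a t₀ + η) := Real.log_nonneg (by linarith)
        linarith [abs_nonneg (Real.log m)]
      linarith only [hsu, habs_M, hKK, hKlog, hlogT1, hlogA0]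
  · -- a = O(T)
    rw [Asymptotics.isBigO_iff]
    refine ⟨a t₀ + η, ?_⟩
    filter_upwards [Filter.eventually_ge_atTop t₀, Filter.eventually_ge_atTop 1] with T hT1 hT2
    obtain ⟨k, rfl⟩ := Nat.exists_eq_add_of_le hT1
    obtain ⟨_, _, k3, _, k5, _⟩ := key k
    have ha8 : (8:ℝ) ≤ a t₀ := by linarith [hc₀A, h3, hA8]
    have hpos : 0 < a (t₀+k) := by linarith
    have hT1' : (1:ℝ) ≤ ((t₀+k : ℕ):ℝ) := by exact_mod_cast hT2
    have hkT : (k:ℝ) ≤ ((t₀+k : ℕ):ℝ) := by push_cast; linarith [(Nat.cast_nonneg t₀ : (0:ℝ) ≤ (t₀:ℝ))]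
    rw [Real.norm_eq_abs, Real.norm_eq_abs, abs_of_pos hpos,
      abs_of_pos (by linarith : (0:ℝ) < ((t₀+k : ℕ):ℝ))]
    have hx : 0 ≤ (a t₀) * (((t₀+k : ℕ):ℝ) - 1) := mul_nonneg (by linarith) (by linarith)
    have hm2 : η*(k:ℝ) ≤ η*((t₀+k : ℕ):ℝ) := mul_le_mul_of_nonneg_left hkT hη.le
    linarith only [k5, hm2, hx]
  · -- T = O(a)
    rw [Asymptotics.isBigO_iff]
    refine ⟨(2*(2+r))/(3/4*(η*r)), ?_⟩
    filter_upwards [Filter.eventually_ge_atTop (2*t₀), Filter.eventually_ge_atTop t₀] with T hT1 hT2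
    obtain ⟨k, rfl⟩ := Nat.exists_eq_add_of_le hT2
    obtain ⟨_, _, k3, _, _, _⟩ := key k
    have hpos : 0 < a (t₀+k) := by linarith
    have hlin' := hlin k
    have hhalf : ((t₀+k : ℕ):ℝ) ≤ 2*(k:ℝ) := by
      have : (t₀:ℝ) ≤ (k:ℝ) := by exact_mod_cast (by omega : t₀ ≤ k)
      push_cast; linarith
    rw [Real.norm_eq_abs, Real.norm_eq_abs, abs_of_pos hpos,
      abs_of_nonneg (by positivity : (0:ℝ) ≤ ((t₀+k : ℕ):ℝ))]
    rw [div_mul_eq_mul_div, le_div_iff₀ (by positivity : (0:ℝ) < 3/4*(η*r))]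
    have hmul : (3/4*(η*r))*((t₀+k : ℕ):ℝ) ≤ (3/4*(η*r))*(2*(k:ℝ)) :=
      mul_le_mul_of_nonneg_left hhalf (by positivity)
    have hAr : 0 < (2+r)*A := mul_pos (by linarith) hApos
    linarith only [hlin', hmul, hAr]
end

section
/- Define G_δ(x, z) := −(1+δ)·σ′(z)·x + σ(x) − σ(z) for real x, z and δ ≥ 0, where σ is the sigmoid and σ′ its derivative. Fix z < 0 and δ ∈ [0, ∞). If x > (e^{−z} + 1)/(1+δ), then G_δ(x, z) < 0. -/
/-- For `z < 0`, `δ ≥ 0` and `x > (e^{-z}+1)/(1+δ)`, the function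
`G_δ(x,z) = -(1+δ)σ'(z)x + σ(x) - σ(z)` is negative. -/
theorem G_neg_of_large_x (δ z x : ℝ) (hδ : 0 ≤ δ) (hz : z < 0)
    (hx : x > (Real.exp (-z) + 1) / (1 + δ)) :
    -(1 + δ) * sigmoid' z * x + sigmoid x - sigmoid z < 0 := by
  have hE : 0 < Real.exp (-z) := Real.exp_pos _
  have hEx : 0 < Real.exp (-x) := Real.exp_pos _
  have h1δ : 0 < 1 + δ := by linarith
  have hden : (0:ℝ) < 1 + Real.exp (-z) := by linarith
  have hsig1 : sigmoid x < 1 := by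
    unfold sigmoid
    rw [div_lt_one (by positivity)]
    linarith
  have hkey : sigmoid' z * (Real.exp (-z) + 1) = 1 - sigmoid z := by
    unfold sigmoid' sigmoid
    field_simp
    ring
  have hs'pos : 0 < sigmoid' z := by
    unfold sigmoid' sigmoid
    have h1 : 1 / (1 + Real.exp (-z)) < 1 := by
      rw [div_lt_one hden]; linarith
    have h0 : 0 < 1 / (1 + Real.exp (-z)) := by positivity
    nlinarith
  have hx' : (Real.exp (-z) + 1) < (1 + δ) * x := by
    rw [gt_iff_lt, div_lt_iff₀ h1δ] at hx
    linarith
  have hchain : 1 - sigmoid z < (1 + δ) * sigmoid' z * x := by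
    rw [← hkey]
    calc sigmoid' z * (Real.exp (-z) + 1) < sigmoid' z * ((1 + δ) * x) := by
          exact mul_lt_mul_of_pos_left hx' hs'pos
      _ = (1 + δ) * sigmoid' z * x := by ring
  linarith
end

section
/- Define G_δ(x, z) := −(1+δ)·σ′(z)·x + σ(x) − σ(z) for real x, z and δ ≥ 0, where σ is the sigmoid and σ′ its derivative. Fix z < 0 and δ ∈ [0, 1]. If 0 ≤ x < (e^{−z} − e^{z})/(1+δ), then G_δ(x, z) > 0. -/
/-- Purely algebraic core of the estimate, with `t = e^{-z}` and `u = e^x`. -/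
lemma G_pos_alg (δ t u x : ℝ) (hδ0 : 0 ≤ δ) (hδ1 : δ ≤ 1) (ht1 : 1 < t)
    (hu1 : 1 ≤ u) (hx0 : 0 ≤ x)
    (hx' : (1 + δ) * (t * x) < t * t - 1) (hsinh : 2 * u * x ≤ u * u - 1)
    (hut : u ≤ t ∨ t ≤ u) :
    -(1 + δ) * (t / (1 + t) ^ 2) * x + u / (1 + u) - 1 / (1 + t) > 0 := by
  have ht0 : (0:ℝ) < t := by linarith
  have hu0 : (0:ℝ) < u := by linarith
  have key : (1 + δ) * (t * x) * (1 + u) < (1 + t) * (u * t - 1) := by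
    rcases hut with hut | hut
    · -- case u ≤ t
      have h2 : t * (1 + u) ^ 2 ≤ u * (1 + t) ^ 2 := by
        nlinarith [mul_nonneg (by linarith : (0:ℝ) ≤ t - u) (by nlinarith : (0:ℝ) ≤ u * t - 1)]
      have part1 : t * x * (1 + u) * (2 * u) ≤ (u - 1) * (1 + t) ^ 2 * u := by
        nlinarith [mul_le_mul_of_nonneg_left hsinh
            (mul_pos ht0 (by linarith : (0:ℝ) < 1 + u)).le,
          mul_le_mul_of_nonneg_right h2 (by linarith : (0:ℝ) ≤ u - 1)]
      have part2 : δ * (t * x) * (1 + u) < (1 + u) * (t * t - 1) / 2 := by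
        rcases eq_or_lt_of_le hδ0 with h | h
        · rw [← h]; nlinarith
        · have hδx : δ * (t * x) * (1 + δ) < δ * (t * t - 1) := by
            nlinarith [mul_lt_mul_of_pos_left hx' h, mul_nonneg (mul_nonneg ht0.le hx0) hδ0]
          have hT : (0:ℝ) < t * t - 1 := by nlinarith
          have h4 : δ * (t * x) * 2 * (1 + δ) < (t * t - 1) * (1 + δ) := by
            nlinarith [hδx, mul_nonneg (by linarith : (0:ℝ) ≤ 1 - δ) hT.le]
          have hδx2 : δ * (t * x) * 2 < t * t - 1 :=
            lt_of_mul_lt_mul_right (by linarith) (by linarith : (0:ℝ) ≤ 1 + δ)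
          nlinarith
      nlinarith
    · -- case t ≤ u
      have h1 : (1 + δ) * (t * x) * (1 + u) < (t * t - 1) * (1 + u) := by nlinarith
      nlinarith
  have hden : (0:ℝ) < (1 + u) * (1 + t) ^ 2 := by positivity
  have heq : -(1 + δ) * (t / (1 + t) ^ 2) * x + u / (1 + u) - 1 / (1 + t)
      = ((1 + t) * (u * t - 1) - (1 + δ) * (t * x) * (1 + u)) / ((1 + u) * (1 + t) ^ 2) := by
    field_simp
    ring
  rw [heq]
  exact div_pos (by linarith) hden

/-- For `z < 0`, `δ ∈ [0,1]` and `0 ≤ x < (e^{-z}-e^{z})/(1+δ)`, the function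
`G_δ(x,z) = -(1+δ)σ'(z)x + σ(x) - σ(z)` is positive. -/
theorem G_pos_of_small_x (δ z x : ℝ) (hδ0 : 0 ≤ δ) (hδ1 : δ ≤ 1) (hz : z < 0)
    (hx0 : 0 ≤ x) (hx : x < (Real.exp (-z) - Real.exp z) / (1 + δ)) :
    -(1 + δ) * sigmoid' z * x + sigmoid x - sigmoid z > 0 := by
  have ht1 : 1 < Real.exp (-z) := Real.one_lt_exp_iff.mpr (by linarith)
  have hu1 : 1 ≤ Real.exp x := Real.one_le_exp hx0
  have ht0 : (0:ℝ) < Real.exp (-z) := Real.exp_pos _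
  have hu0 : (0:ℝ) < Real.exp x := Real.exp_pos _
  have hδpos : (0:ℝ) < 1 + δ := by linarith
  have hez : Real.exp z * Real.exp (-z) = 1 := by
    rw [← Real.exp_add]; simp
  have hx' : (1 + δ) * (Real.exp (-z) * x) < Real.exp (-z) * Real.exp (-z) - 1 := by
    have h1 : x * (1 + δ) < Real.exp (-z) - Real.exp z := (lt_div_iff₀ hδpos).mp hx
    nlinarith [mul_lt_mul_of_pos_left h1 ht0]
  have hsinh : 2 * Real.exp x * x ≤ Real.exp x * Real.exp x - 1 := by
    have h := Real.self_le_sinh_iff.mpr hx0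
    rw [Real.sinh_eq, Real.exp_neg] at h
    have h3 : Real.exp x * (Real.exp x)⁻¹ = 1 := mul_inv_cancel₀ (ne_of_gt hu0)
    nlinarith [mul_le_mul_of_nonneg_left h hu0.le]
  have hσz : sigmoid z = 1 / (1 + Real.exp (-z)) := rfl
  have hσx : sigmoid x = Real.exp x / (1 + Real.exp x) := by
    unfold sigmoid
    rw [Real.exp_neg]
    rw [div_eq_div_iff (by positivity) (by positivity)]
    field_simp
    ring
  have hσ'z : sigmoid' z = Real.exp (-z) / (1 + Real.exp (-z)) ^ 2 := by
    unfold sigmoid'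
    rw [hσz]
    have h : (1:ℝ) + Real.exp (-z) ≠ 0 := by positivity
    field_simp
    ring
  rw [hσx, hσz, hσ'z]
  exact G_pos_alg δ (Real.exp (-z)) (Real.exp x) x hδ0 hδ1 ht1 hu1 hx0 hx' hsinh
    (le_total _ _)
end

section
/- For every z < 0, the sigmoid function satisfies (σ(−z) − σ(z)) / (−σ′(z)·z) ≥ 2, where σ′(z) = σ(z)(1−σ(z)); equivalently, σ(−z) − σ(z) ≥ −2·σ(z)·(1−σ(z))·z for all z < 0. -/
/-!
Writing `σ(-z) = 1 - σ(z)` and `σ(z) e^{-z} = σ(-z)` one finds the identity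
`σ(-z) - σ(z) = 2 sinh(-z) σ'(z)`, so the ratio in question is `2 sinh(-z) / (-z)`,
which is at least `2` because `sinh y ≥ y` for `y ≥ 0`.
-/

theorem sigmoid_eq_real_sigmoid : sigmoid = Real.sigmoid := by
  funext z
  rw [sigmoid, Real.sigmoid_def, one_div]

theorem sigmoid'_pos (z : ℝ) : 0 < sigmoid' z := by
  rw [sigmoid', sigmoid_eq_real_sigmoid]
  exact mul_pos (Real.sigmoid_pos z) (sub_pos.2 (Real.sigmoid_lt_one z))

theorem sigmoid_neg_sub_sigmoid (z : ℝ) :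
    sigmoid (-z) - sigmoid z = 2 * Real.sinh (-z) * sigmoid' z := by
  have h_neg : Real.sigmoid (-z) = 1 - Real.sigmoid z := Real.sigmoid_neg z
  have h_exp_neg : Real.sigmoid z * Real.exp (-z) = Real.sigmoid (-z) :=
    Real.sigmoid_mul_rexp_neg z
  have h_exp : Real.sigmoid (-z) * Real.exp z = Real.sigmoid z := by
    simpa using Real.sigmoid_mul_rexp_neg (-z)
  rw [sigmoid', sigmoid_eq_real_sigmoid, Real.sinh_eq, neg_neg, ← h_neg]
  linear_combination Real.sigmoid z * h_exp - Real.sigmoid (-z) * h_exp_neg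
    - (Real.sigmoid (-z) - Real.sigmoid z) * h_neg

theorem two_mul_sigmoid'_mul_neg_le (z : ℝ) (hz : z ≤ 0) :
    2 * sigmoid' z * -z ≤ sigmoid (-z) - sigmoid z := by
  have h_sinh : -z ≤ Real.sinh (-z) := Real.self_le_sinh_iff.2 (neg_nonneg.2 hz)
  rw [sigmoid_neg_sub_sigmoid, mul_right_comm]
  gcongr
  exact (sigmoid'_pos z).le

/-- For all `z < 0`, `(σ(-z) - σ(z))/(-σ'(z)·z) ≥ 2`; equivalently,
`σ(-z) - σ(z) ≥ -2σ(z)(1-σ(z))z`. -/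
theorem sigmoid_gap_ratio (z : ℝ) (hz : z < 0) :
    (sigmoid (-z) - sigmoid z) / (-(sigmoid' z * z)) ≥ 2 ∧
    sigmoid (-z) - sigmoid z ≥ -(2 * sigmoid z * (1 - sigmoid z) * z) := by
  have h_gap := two_mul_sigmoid'_mul_neg_le z hz.le
  have h_denom : 0 < -(sigmoid' z * z) := by
    rw [← mul_neg]
    exact mul_pos (sigmoid'_pos z) (neg_pos.2 hz)
  constructor
  · rw [ge_iff_le, le_div_iff₀ h_denom]
    linarith
  · rw [sigmoid'] at h_gap
    linarith
end

section
/- Fix r > 0 and let a > 0 and b be real numbers with a + b < 0. Then the two conditions e^{a+b}·a/(1 − e^{2(a+b)}) < 1 and e^{a+b}·a/(1 + e^{a+b}) ≥ (1 + 1/a)/(1 + r + 1/a) hold simultaneously if and only if a·(1 + √(1 + 4a^{−2}))/2 < e^{−(a+b)} ≤ a·(1 + r + a^{−1})/(1 + a^{−1}) − 1. Moreover, for fixed a > 0, there exists b satisfying these conditions whenever (1 + r/(1 + a^{−1}) − a^{−1})² − 1 − 4a^{−2} > 0. -/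
set_option maxHeartbeats 1000000


/-- Equivalent form of the first two requirements of Assumption 1, and
nonemptiness of the admissible range of `b`. -/
theorem init_cond_equiv_range (r : ℝ) (hr : 0 < r) (a : ℝ) (ha : 0 < a) :
    (∀ b : ℝ, a + b < 0 →
      ((Real.exp (a + b) * a / (1 - Real.exp (2 * (a + b))) < 1 ∧
        Real.exp (a + b) * a / (1 + Real.exp (a + b)) ≥
          (1 + 1 / a) / (1 + r + 1 / a)) ↔
       (a * (1 + Real.sqrt (1 + 4 / a ^ 2)) / 2 < Real.exp (-(a + b)) ∧
        Real.exp (-(a + b)) ≤ a * (1 + r + a⁻¹) / (1 + a⁻¹) - 1))) ∧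
    ((1 + r / (1 + a⁻¹) - a⁻¹) ^ 2 - 1 - 4 / a ^ 2 > 0 →
      ∃ b : ℝ, a + b < 0 ∧
        Real.exp (a + b) * a / (1 - Real.exp (2 * (a + b))) < 1 ∧
        Real.exp (a + b) * a / (1 + Real.exp (a + b)) ≥
          (1 + 1 / a) / (1 + r + 1 / a)) := by
  have ha' : a ≠ 0 := ne_of_gt ha
  set s : ℝ := Real.sqrt (1 + 4 / a ^ 2) with hsdef
  have hs2 : s ^ 2 = 1 + 4 / a ^ 2 := Real.sq_sqrt (by positivity)
  have hs2' : a ^ 2 * s ^ 2 = a ^ 2 + 4 := by rw [hs2]; field_simp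
  have hs1 : 1 ≤ s := by
    rw [hsdef]
    calc (1:ℝ) = Real.sqrt 1 := Real.sqrt_one.symm
      _ ≤ Real.sqrt (1 + 4 / a ^ 2) := by
          apply Real.sqrt_le_sqrt
          have : (0:ℝ) < 4 / a ^ 2 := by positivity
          linarith
  clear_value s
  set L : ℝ := a * (1 + s) / 2 with hLdef
  have hL2 : L ^ 2 = a * L + 1 := by
    rw [hLdef]; linear_combination (1/4) * hs2'
  have hLa : a ≤ L := by
    rw [hLdef]
    nlinarith [mul_nonneg ha.le (show (0:ℝ) ≤ s - 1 by linarith)]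
  have hLpos : 0 < L := lt_of_lt_of_le ha hLa
  have hL1 : 1 < L := by nlinarith [mul_pos ha hLpos]
  clear_value L
  set U : ℝ := a * (1 + r + a⁻¹) / (1 + a⁻¹) - 1 with hUdef
  have hc : (0:ℝ) < 1 + 1 / a := by positivity
  have hd : (0:ℝ) < 1 + r + 1 / a := by positivity
  have hcU : (1 + 1 / a) * (U + 1) = a * (1 + r + 1 / a) := by
    rw [hUdef]; field_simp; ring
  have hUq : U = a * (1 + r / (1 + a⁻¹) - a⁻¹) := by
    rw [hUdef]; field_simp; ring
  have hcU' : (a + 1) * (U + 1) = a ^ 2 * (1 + r) + a := by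
    rw [hUdef]; field_simp; ring
  clear_value U
  have main : ∀ b : ℝ, a + b < 0 →
      ((Real.exp (a + b) * a / (1 - Real.exp (2 * (a + b))) < 1 ∧
        Real.exp (a + b) * a / (1 + Real.exp (a + b)) ≥
          (1 + 1 / a) / (1 + r + 1 / a)) ↔
       (L < Real.exp (-(a + b)) ∧ Real.exp (-(a + b)) ≤ U)) := by
    intro b hb
    set t : ℝ := Real.exp (a + b) with htdef
    have ht0 : 0 < t := Real.exp_pos _
    have ht1 : t < 1 := by
      rw [htdef, ← Real.exp_zero]
      exact Real.exp_lt_exp.mpr hb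
    have h2 : Real.exp (2 * (a + b)) = t * t := by
      rw [two_mul, Real.exp_add]
    have hneg : Real.exp (-(a + b)) = t⁻¹ := Real.exp_neg _
    rw [h2, hneg]
    clear_value t
    have h1mt : 0 < 1 - t * t := by nlinarith
    have h1pt : 0 < 1 + t := by linarith
    have keyL : L * (t * t + a * t - 1) = (L * t - 1) * (t + L) := by
      linear_combination (-t) * hL2
    have keyU : t * (a ^ 2 * (1 + r) + a) - (a + 1) * (1 + t) =
        (a + 1) * (U * t - 1) := by
      linear_combination (-t) * hcU'
    have id1 : a * ((1 + 1 / a) * (1 + t)) = (a + 1) * (1 + t) := by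
      field_simp
    have id2 : a * (t * a * (1 + r + 1 / a)) = t * (a ^ 2 * (1 + r) + a) := by
      field_simp
    rw [div_lt_one h1mt, ge_iff_le, div_le_div_iff₀ hd h1pt,
      show L < t⁻¹ ↔ L * t < 1 by rw [inv_eq_one_div, lt_div_iff₀ ht0],
      show t⁻¹ ≤ U ↔ 1 ≤ U * t by rw [inv_eq_one_div, div_le_iff₀ ht0]]
    constructor
    · rintro ⟨h1, h2'⟩
      constructor
      · by_contra hcon
        push_neg at hcon
        have h0 : 0 ≤ (L * t - 1) * (t + L) :=
          mul_nonneg (by linarith) (by linarith)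
        have hx : L * (t * t + a * t - 1) < 0 :=
          mul_neg_of_pos_of_neg hLpos (by linarith)
        rw [keyL] at hx
        linarith
      · have h3 := mul_le_mul_of_nonneg_left h2' ha.le
        rw [id1, id2] at h3
        by_contra hcon
        push_neg at hcon
        have hx : (a + 1) * (U * t - 1) < 0 :=
          mul_neg_of_pos_of_neg (by linarith) (by linarith)
        linarith
    · rintro ⟨h1, h2'⟩
      constructor
      · have h0 : (L * t - 1) * (t + L) < 0 :=
          mul_neg_of_neg_of_pos (by linarith) (by linarith)
        by_contra hcon
        push_neg at hcon
        have hx : 0 ≤ L * (t * t + a * t - 1) :=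
          mul_nonneg hLpos.le (by linarith)
        rw [keyL] at hx
        linarith
      · have h0 : 0 ≤ (a + 1) * (U * t - 1) :=
          mul_nonneg (by linarith) (by linarith)
        have hfin : a * ((1 + 1 / a) * (1 + t)) ≤ a * (t * a * (1 + r + 1 / a)) := by
          rw [id1, id2]; linarith
        exact le_of_mul_le_mul_left hfin ha
  refine ⟨main, ?_⟩
  intro h
  set q : ℝ := 1 + r / (1 + a⁻¹) - a⁻¹ with hqdef
  clear_value q
  have hqpos : 0 < q := by
    by_contra hq
    push_neg at hq
    have hia : (0:ℝ) < a⁻¹ := inv_pos.mpr ha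
    have hqlb : -a⁻¹ < q := by
      rw [hqdef]
      have : 0 < r / (1 + a⁻¹) := by positivity
      linarith
    have hq2 : q ^ 2 < a⁻¹ ^ 2 := by
      nlinarith [mul_pos (show (0:ℝ) < a⁻¹ + q by linarith)
        (show (0:ℝ) < a⁻¹ - q by linarith)]
    have hinv2 : a⁻¹ ^ 2 = 1 / a ^ 2 := by field_simp
    have hA : (0:ℝ) < 1 / a ^ 2 := by positivity
    have h4a : (4:ℝ) / a ^ 2 = 4 * (1 / a ^ 2) := by ring
    rw [h4a] at h
    have hq2' : q ^ 2 < 1 / a ^ 2 := by rw [← hinv2]; exact hq2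
    linarith only [h, hA, hq2']
  have hUpos : 0 < U := by rw [hUq]; exact mul_pos ha hqpos
  have ha2 : (0:ℝ) < a ^ 2 := by positivity
  have h4 : a ^ 2 * (4 / a ^ 2) = 4 := by field_simp
  have hU2 : U ^ 2 > a ^ 2 + 4 := by
    have hq2 : 1 + 4 / a ^ 2 < q ^ 2 := by linarith
    have := mul_lt_mul_of_pos_left hq2 ha2
    rw [hUq]
    nlinarith [this, h4]
  have h2La : (2 * L - a) ^ 2 = a ^ 2 + 4 := by linear_combination 4 * hL2
  have h2Lapos : 0 < 2 * L - a := by linarith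
  have hUL : L < U := by
    have h5 : 2 * L - a < U := by nlinarith [hU2, h2La, hUpos, h2Lapos]
    linarith
  have hU1 : 1 < U := lt_trans hL1 hUL
  refine ⟨-Real.log U - a, ?_, ?_⟩
  · have : 0 < Real.log U := Real.log_pos hU1
    linarith
  · have hb : a + (-Real.log U - a) < 0 := by
      have : 0 < Real.log U := Real.log_pos hU1
      linarith
    have hneg : Real.exp (-(a + (-Real.log U - a))) = U := by
      rw [show -(a + (-Real.log U - a)) = Real.log U by ring, Real.exp_log hUpos]
    exact (main _ hb).mpr (by rw [hneg]; exact ⟨hUL, le_refl U⟩)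
end

section
/- Fix η, r > 0 and consider the recursion a_{t+1} = a_t − η·σ′(a_t+b_t)·a_t + η·(σ(a_t) − σ(a_t+b_t)), b_{t+1} = b_t − η·r·σ′(a_t+b_t)·a_t. Suppose the sequences satisfy a_t → +∞ and a_t + b_t → −∞ as t → ∞. Then lim_{t→∞} (r·a_t − b_t)/t = η·r. -/
lemma sigmoid_tendsto_one {u : ℕ → ℝ} (h : Filter.Tendsto u Filter.atTop Filter.atTop) :
    Filter.Tendsto (fun t => sigmoid (u t)) Filter.atTop (nhds 1) := by
  have hexp : Filter.Tendsto (fun t => Real.exp (-(u t))) Filter.atTop (nhds 0) :=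
    Real.tendsto_exp_atBot.comp (Filter.tendsto_neg_atBot_iff.mpr h)
  have : Filter.Tendsto (fun t => 1 / (1 + Real.exp (-(u t)))) Filter.atTop (nhds (1 / (1 + 0))) :=
    Filter.Tendsto.div tendsto_const_nhds (tendsto_const_nhds.add hexp) (by norm_num)
  simpa [sigmoid] using this

lemma sigmoid_tendsto_zero {u : ℕ → ℝ} (h : Filter.Tendsto u Filter.atTop Filter.atBot) :
    Filter.Tendsto (fun t => sigmoid (u t)) Filter.atTop (nhds 0) := by
  have hexp : Filter.Tendsto (fun t => Real.exp (-(u t))) Filter.atTop Filter.atTop :=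
    Real.tendsto_exp_atTop.comp (Filter.tendsto_neg_atTop_iff.mpr h)
  have : Filter.Tendsto (fun t => (1 + Real.exp (-(u t)))⁻¹) Filter.atTop (nhds 0) :=
    Filter.Tendsto.inv_tendsto_atTop (Filter.tendsto_atTop_add_const_left _ _ hexp)
  simpa [sigmoid, one_div] using this

/-- If `a_t → +∞` and `a_t + b_t → -∞`, then `(r·a_t - b_t)/t → η·r`. -/
theorem ra_sub_b_linear_growth (η r : ℝ) (hη : 0 < η) (hr : 0 < r)
    (a b : ℕ → ℝ)
    (ha : ∀ t : ℕ, a (t + 1) =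
      a t - η * sigmoid' (a t + b t) * a t +
        η * (sigmoid (a t) - sigmoid (a t + b t)))
    (hb : ∀ t : ℕ, b (t + 1) = b t - η * r * sigmoid' (a t + b t) * a t)
    (hatop : Filter.Tendsto a Filter.atTop Filter.atTop)
    (habot : Filter.Tendsto (fun t : ℕ => a t + b t) Filter.atTop Filter.atBot) :
    Filter.Tendsto (fun t : ℕ => (r * a t - b t) / t) Filter.atTop
      (nhds (η * r)) := by
  set d : ℕ → ℝ := fun t => η * r * (sigmoid (a t) - sigmoid (a t + b t)) with hd
  set c : ℕ → ℝ := fun t => r * a t - b t with hc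
  have hstep : ∀ t, c (t + 1) = c t + d t := by
    intro t
    simp only [hc, hd, ha t, hb t]
    ring
  have hsum : ∀ n, c n = c 0 + ∑ i ∈ Finset.range n, d i := by
    intro n
    induction n with
    | zero => simp
    | succ n ih => rw [hstep n, ih, Finset.sum_range_succ]; ring
  have hdlim : Filter.Tendsto d Filter.atTop (nhds (η * r)) := by
    have : Filter.Tendsto (fun t => sigmoid (a t) - sigmoid (a t + b t)) Filter.atTop
        (nhds (1 - 0)) := (sigmoid_tendsto_one hatop).sub (sigmoid_tendsto_zero habot)
    have := this.const_mul (η * r)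
    simpa using this
  have hcesaro : Filter.Tendsto (fun n : ℕ => (∑ i ∈ Finset.range n, d i) / n) Filter.atTop
      (nhds (η * r)) := by simpa [div_eq_inv_mul] using hdlim.cesaro
  have hzero : Filter.Tendsto (fun n : ℕ => c 0 / n) Filter.atTop (nhds 0) :=
    tendsto_const_div_atTop_nhds_zero_nat (c 0)
  have := hzero.add hcesaro
  rw [zero_add] at this
  refine this.congr fun n => ?_
  rw [← add_div, ← hsum n]
end

section
/- (Classification: curse to the learner, deterministic core.) Let H be a real Hilbert space and θ⋆, θ⁰ ∈ H with θ⋆ ≠ 0 and ⟨θ⋆ − θ⁰, θ⋆⟩ ≠ 0. Fix η > 0 and n ≥ 1. For each i ∈ {1, …, n}, let (u^i_T)_{T ≥ 0} be unit vectors in H with lim_{T→∞} ⟨u^i_T, θ⋆⟩ = 0, and let y^i_T ∈ [0, 1]. Define θ^{(1)}_T = θ⁰ − η·(1/n)·Σ_{i=1}^n (σ(⟨u^i_T, θ⁰⟩) − y^i_T)·u^i_T. Then lim_{T→∞} ⟨θ⋆ − θ^{(1)}_T, θ⋆⟩ = ⟨θ⋆ − θ⁰, θ⋆⟩, and liminf_{T→∞}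 ‖θ⋆ − θ^{(1)}_T‖ ≥ |⟨θ⋆ − θ⁰, θ⋆⟩| / ‖θ⋆‖ > 0. -/
open scoped RealInnerProductSpace

lemma sigmoid_mem_Icc (z : ℝ) : sigmoid z ∈ Set.Icc (0 : ℝ) 1 := by
  have h : 0 < 1 + Real.exp (-z) := by positivity
  constructor
  · rw [sigmoid]; positivity
  · rw [sigmoid, div_le_one h]
    have := (Real.exp_pos (-z)).le
    linarith

/-- Classification, curse to the learner (deterministic core): if the unit covariates
become orthogonal to `θ⋆` in the limit, the learner's one-step logistic gradient
descent makes no progress along `θ⋆`, and the error stays bounded away from zero. -/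
theorem classification_curse_to_learner
    {H : Type*} [NormedAddCommGroup H] [InnerProductSpace ℝ H]
    (θs θ0 : H) (hθs : θs ≠ 0) (hcorr : ⟪θs - θ0, θs⟫ ≠ 0)
    (η : ℝ) (hη : 0 < η) (n : ℕ) (hn : 1 ≤ n)
    (u : Fin n → ℕ → H) (hu : ∀ i T, ‖u i T‖ = 1)
    (hlim : ∀ i, Filter.Tendsto (fun T : ℕ => ⟪u i T, θs⟫)
      Filter.atTop (nhds 0))
    (y : Fin n → ℕ → ℝ) (hy : ∀ i T, y i T ∈ Set.Icc (0 : ℝ) 1)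
    (θ1 : ℕ → H)
    (hθ1 : ∀ T : ℕ, θ1 T =
      θ0 - (η * (n : ℝ)⁻¹) •
        ∑ i : Fin n, (sigmoid ⟪u i T, θ0⟫ - y i T) • u i T) :
    Filter.Tendsto (fun T : ℕ => ⟪θs - θ1 T, θs⟫) Filter.atTop
      (nhds ⟪θs - θ0, θs⟫) ∧
    (∀ ε > (0 : ℝ), ∀ᶠ T : ℕ in Filter.atTop,
      ‖θs - θ1 T‖ ≥ |⟪θs - θ0, θs⟫| / ‖θs‖ - ε) ∧
    |⟪θs - θ0, θs⟫| / ‖θs‖ > 0 := by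
  have hns : (0:ℝ) < ‖θs‖ := norm_pos_iff.mpr hθs
  -- expand the inner product
  have hexp : ∀ T : ℕ, ⟪θs - θ1 T, θs⟫ =
      ⟪θs - θ0, θs⟫ + (η * (n : ℝ)⁻¹) *
        ∑ i : Fin n, (sigmoid ⟪u i T, θ0⟫ - y i T) * ⟪u i T, θs⟫ := by
    intro T
    rw [hθ1 T]
    simp [inner_sub_left, real_inner_smul_left, sum_inner, Finset.mul_sum, mul_assoc]
    ring
  -- the correction term tends to 0
  have hterm : ∀ i : Fin n, Filter.Tendsto
      (fun T : ℕ => (sigmoid ⟪u i T, θ0⟫ - y i T) * ⟪u i T, θs⟫)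
      Filter.atTop (nhds 0) := by
    intro i
    refine squeeze_zero_norm (fun T => ?_) (by simpa using (hlim i).abs)
    ·
      rw [Real.norm_eq_abs, abs_mul]
      have h1 := sigmoid_mem_Icc ⟪u i T, θ0⟫
      have h2 := hy i T
      have : |sigmoid ⟪u i T, θ0⟫ - y i T| ≤ 1 := by
        rw [abs_le]
        constructor <;> [linarith [h1.1, h2.2]; linarith [h1.2, h2.1]]
      nlinarith [abs_nonneg (⟪u i T, θs⟫ : ℝ)]
  have hsum : Filter.Tendsto
      (fun T : ℕ => (η * (n : ℝ)⁻¹) *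
        ∑ i : Fin n, (sigmoid ⟪u i T, θ0⟫ - y i T) * ⟪u i T, θs⟫)
      Filter.atTop (nhds 0) := by
    have := (Filter.Tendsto.const_mul (η * (n : ℝ)⁻¹)
      (tendsto_finset_sum Finset.univ (fun i _ => hterm i)))
    simpa using this
  have htend : Filter.Tendsto (fun T : ℕ => ⟪θs - θ1 T, θs⟫) Filter.atTop
      (nhds ⟪θs - θ0, θs⟫) := by
    have := (tendsto_const_nhds (x := (⟪θs - θ0, θs⟫ : ℝ))
      (f := Filter.atTop (α := ℕ))).add hsum
    simp only [add_zero] at this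
    exact this.congr (fun T => (hexp T).symm)
  have hpos : |⟪θs - θ0, θs⟫| / ‖θs‖ > 0 :=
    div_pos (abs_pos.mpr hcorr) hns
  refine ⟨htend, ?_, hpos⟩
  intro ε hε
  -- eventually |⟪θs - θ1 T, θs⟫| > |⟪θs - θ0, θs⟫| - ε‖θs‖
  have habs : Filter.Tendsto (fun T : ℕ => |⟪θs - θ1 T, θs⟫| / ‖θs‖)
      Filter.atTop (nhds (|⟪θs - θ0, θs⟫| / ‖θs‖)) :=
    htend.abs.div_const _
  have : ∀ᶠ T : ℕ in Filter.atTop,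
      |⟪θs - θ1 T, θs⟫| / ‖θs‖ > |⟪θs - θ0, θs⟫| / ‖θs‖ - ε :=
    habs.eventually (eventually_gt_nhds (by linarith))
  filter_upwards [this] with T hT
  have hcs : |⟪θs - θ1 T, θs⟫| ≤ ‖θs - θ1 T‖ * ‖θs‖ := abs_real_inner_le_norm _ _
  have : |⟪θs - θ1 T, θs⟫| / ‖θs‖ ≤ ‖θs - θ1 T‖ := by
    rw [div_le_iff₀ hns]
    exact hcs
  linarith
end
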